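/- Let f : ℝ^d → ℝ be Lipschitz continuous with Lipschitz constant κ (with respect to the Euclidean norm), let x_1, …, x_n ∈ ℝ^d, and define the kernel matrix K ∈ ℝ^{n×n} by K_{p,q} = f(x_p − x_q). Let C_i ⊆ {1,…,n} be a cluster of radius at most R, i.e., there exists c ∈ ℝ^d with ‖x_p − c‖_2 ≤ R for all p ∈ C_i. Then for every positive integer r, the best rank-r approximation error of the row-submatrix K(C_i,:) (the |C_i| × n matrix with rows indexed by C_i) in the Frobenius norm satisfies: there exists a matrix A ∈ ℝ^{|C_i| × n} of rank at most r with ‖K(C_i,:) − A‖_F ≤ 4 κ r^{−1/d} √(|C_i| · n) · R (equivalently, the infimum of ‖K(C_i,:) − A‖_F over matrices A of rank at most r is bounded by 4 κ r^{−1/d} √(|C_i| · n) · R). -/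

import Mathlib

/-!
Cover the ball of radius `R` around the cluster by at most `r` balls of radius
`δ = 4 R r^(-1/d)`; such a cover exists because a maximal `δ`-separated subset of the ball is a
cover, and a volume comparison bounds its size by `(1 + 2R/δ)^d ≤ r`. Moving each cluster point
`x p` to the centre `g p` of a ball containing it gives the matrix `f (g p - x q)`, whose rows
take at most `r` values, so its rank is at most `r`; as `f` is `κ`-Lipschitz its entries differ
from those of `K(C,:)` by at most `κ δ`.
-/

open scoped NNReal

noncomputable def frobNorm {m n : Type*} [Fintype m] [Fintype n]
    (M : Matrix m n ℝ) : ℝ :=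
  Real.sqrt (∑ i, ∑ j, (M i j) ^ 2)

open scoped ENNReal
open Metric MeasureTheory Module

section
variable {E : Type*} [NormedAddCommGroup E] [NormedSpace ℝ E] [FiniteDimensional ℝ E]

theorem Metric.IsSeparated.card_le_of_subset_closedBall {s : Finset E} {c : E} {R : ℝ}
    {δ : ℝ≥0} (hR : 0 ≤ R) (hδ : 0 < δ) (hs : ↑s ⊆ closedBall c R)
    (hsep : IsSeparated δ (s : Set E)) :
    (s.card : ℝ) ≤ (1 + 2 * R / δ) ^ finrank ℝ E := by
  borelize E
  let μ : Measure E := Measure.addHaar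
  have hδ2 : (0 : ℝ) < δ / 2 := by positivity
  have hdisj : (s : Set E).PairwiseDisjoint fun t => ball t (δ / 2) := by
    intro a ha b hb hab
    apply ball_disjoint_ball
    have hab' : (δ : ℝ≥0∞) < edist a b := hsep ha hb hab
    rw [edist_nndist, ENNReal.coe_lt_coe, ← NNReal.coe_lt_coe, coe_nndist] at hab'
    linarith
  have hsub : (⋃ t ∈ s, ball t (δ / 2)) ⊆ ball c (R + δ / 2) :=
    Set.iUnion₂_subset fun t ht => ball_subset_ball' (by linarith [mem_closedBall.1 (hs ht)])
  have hvol : (s.card : ℝ≥0∞) * ENNReal.ofReal ((δ / 2) ^ finrank ℝ E) * μ (ball 0 1) ≤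
      ENNReal.ofReal ((R + δ / 2) ^ finrank ℝ E) * μ (ball 0 1) :=
    calc (s.card : ℝ≥0∞) * ENNReal.ofReal ((δ / 2) ^ finrank ℝ E) * μ (ball 0 1)
        = μ (⋃ t ∈ s, ball t (δ / 2)) := by
          rw [measure_biUnion_finset hdisj fun _ _ => measurableSet_ball]
          simp only [μ.addHaar_ball_of_pos _ hδ2, Finset.sum_const, nsmul_eq_mul, mul_assoc]
      _ ≤ μ (ball c (R + δ / 2)) := measure_mono hsub
      _ = ENNReal.ofReal ((R + δ / 2) ^ finrank ℝ E) * μ (ball 0 1) :=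
          μ.addHaar_ball_of_pos _ (by linarith)
  have hvol' := ENNReal.toReal_le_of_le_ofReal (by positivity)
    ((ENNReal.mul_le_mul_iff_left (measure_ball_pos μ _ one_pos).ne'
      measure_ball_lt_top.ne).1 hvol)
  rw [ENNReal.toReal_mul, ENNReal.toReal_natCast, ENNReal.toReal_ofReal (by positivity)] at hvol'
  calc (s.card : ℝ) ≤ ((R + δ / 2) / (δ / 2)) ^ finrank ℝ E := by
        rwa [div_pow, le_div_iff₀ (by positivity)]
    _ = (1 + 2 * R / δ) ^ finrank ℝ E := by
        congr 1; field_simp; ring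

theorem Metric.packingNumber_closedBall_le {c : E} {R : ℝ} {δ : ℝ≥0} (hR : 0 ≤ R)
    (hδ : 0 < δ) {N : ℕ} (hN : (1 + 2 * R / δ) ^ finrank ℝ E ≤ N) :
    packingNumber δ (closedBall c R) ≤ N := by
  refine iSup₂_le fun T hT => iSup_le fun hsep => ?_
  by_contra! hlt
  obtain ⟨T', hT'T, hT'card⟩ := Set.exists_subset_encard_eq (Order.add_one_le_of_lt hlt)
  have hfin : T'.Finite := Set.finite_of_encard_eq_coe (k := N + 1) (by simpa using hT'card)
  have hcard := (hsep.subset (hfin.coe_toFinset.trans_subset hT'T)).card_le_of_subset_closedBall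
    hR hδ (hfin.coe_toFinset.trans_subset (hT'T.trans hT))
  rw [hfin.encard_eq_coe_toFinset_card] at hT'card
  have hT'card' : hfin.toFinset.card = N + 1 := by exact_mod_cast hT'card
  rw [hT'card'] at hcard
  push_cast at hcard
  linarith

theorem Metric.exists_finset_card_le_closedBall_subset_iUnion_closedBall {c : E} {R δ : ℝ}
    (hR : 0 ≤ R) (hδ : 0 < δ) {N : ℕ} (hN : (1 + 2 * R / δ) ^ finrank ℝ E ≤ N) :
    ∃ s : Finset E, s.card ≤ N ∧ closedBall c R ⊆ ⋃ t ∈ s, closedBall t δ := by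
  lift δ to ℝ≥0 using hδ.le
  have hcov : coveringNumber δ (closedBall c R) ≤ N :=
    (coveringNumber_le_packingNumber _ _).trans (packingNumber_closedBall_le hR hδ hN)
  obtain ⟨S, -, hfin, hS, hcard⟩ :=
    exists_set_encard_eq_coveringNumber (hcov.trans_lt (by simp)).ne
  refine ⟨hfin.toFinset, ?_, ?_⟩
  · rw [hfin.encard_eq_coe_toFinset_card] at hcard
    exact_mod_cast hcard.trans_le hcov
  · simpa using hS.subset_iUnion_closedBall

theorem Metric.exists_finset_card_le_closedBall_subset_iUnion_closedBall_rpow (c : E) (R : ℝ)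
    {r : ℕ} (hr : 0 < r) :
    ∃ s : Finset E, s.card ≤ r ∧
      closedBall c R ⊆
        ⋃ t ∈ s, closedBall t (4 * R * (r : ℝ) ^ (-(1 : ℝ) / finrank ℝ E)) := by
  set ρ := (r : ℝ) ^ (-(1 : ℝ) / finrank ℝ E) with hρ
  rcases lt_or_ge R 0 with hR | hR
  · exact ⟨∅, by simp, by simp [closedBall_eq_empty.2 hR]⟩
  -- When `4ρ ≥ 1` (in particular when `finrank ℝ E = 0`, where `ρ = r ^ 0`) one ball
  -- suffices; otherwise `ρ ≤ 1/2` gives `1 + 2R/(4Rρ) ≤ ρ⁻¹` and `ρ⁻¹ ^ finrank ℝ E = r`.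
  rcases le_or_gt R (4 * R * ρ) with hsingle | hsingle
  · exact ⟨{c}, by simpa [Nat.one_le_iff_ne_zero] using hr.ne',
      by simpa using closedBall_subset_closedBall hsingle⟩
  have hρ_pos : 0 < ρ := Real.rpow_pos_of_pos (by exact_mod_cast hr) _
  have hR_pos : 0 < R := by nlinarith
  have hρ_le : ρ ≤ 1 / 2 := by nlinarith
  have hd : finrank ℝ E ≠ 0 := fun hd => by simp [hρ, hd] at hsingle; linarith
  have hρ_pow : ρ ^ finrank ℝ E = (r : ℝ)⁻¹ := by
    rw [hρ, ← Real.rpow_natCast, ← Real.rpow_mul (by positivity),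
      div_mul_cancel₀ _ (by exact_mod_cast hd), Real.rpow_neg_one]
  refine exists_finset_card_le_closedBall_subset_iUnion_closedBall hR (by positivity) ?_
  calc (1 + 2 * R / (4 * R * ρ)) ^ finrank ℝ E ≤ ρ⁻¹ ^ finrank ℝ E := by
        gcongr
        have h2 : 2 ≤ ρ⁻¹ := by rw [le_inv_comm₀ two_pos hρ_pos]; linarith
        have : 2 * R / (4 * R * ρ) = ρ⁻¹ / 2 := by field_simp; ring
        linarith
    _ = r := by rw [inv_pow, hρ_pow, inv_inv]

end

theorem Matrix.rank_le_card_of_forall_row_mem {m n K : Type*} [Fintype m] [Fintype n] [Field K]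
    {A : Matrix m n K} {s : Finset (n → K)} (h : ∀ i, A i ∈ s) : A.rank ≤ s.card := by
  rw [rank_eq_finrank_span_row]
  exact (Submodule.finrank_mono (Submodule.span_mono (Set.range_subset_iff.2 h))).trans
    (finrank_span_finset_le_card s)

theorem frobNorm_le_of_forall_abs_le {m n : Type*} [Fintype m] [Fintype n] {M : Matrix m n ℝ}
    {b : ℝ} (h : ∀ p q, |M p q| ≤ b) :
    frobNorm M ≤ Real.sqrt (Fintype.card m * Fintype.card n) * b := by
  rcases lt_or_ge b 0 with hb | hb
  · have : IsEmpty (m × n) := ⟨fun pq => (abs_nonneg _).not_gt ((h pq.1 pq.2).trans_lt hb)⟩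
    rcases isEmpty_prod.1 this with hm | hn <;> simp [frobNorm]
  have hsum : ∑ p, ∑ q, M p q ^ 2 ≤ ∑ _p : m, ∑ _q : n, b ^ 2 := by
    refine Finset.sum_le_sum fun p _ => Finset.sum_le_sum fun q _ => ?_
    exact sq_le_sq' (abs_le.1 (h p q)).1 (abs_le.1 (h p q)).2
  calc frobNorm M ≤ Real.sqrt ((Fintype.card m * Fintype.card n : ℝ) * b ^ 2) := by
        refine Real.sqrt_le_sqrt (hsum.trans_eq ?_)
        simp only [Finset.sum_const, Finset.card_univ, nsmul_eq_mul]
        ring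
    _ = Real.sqrt (Fintype.card m * Fintype.card n) * b := by
        rw [Real.sqrt_mul (by positivity), Real.sqrt_sq hb]

/-- Low-rank approximation of the row-submatrix `K(C,:)` of a shift-invariant
kernel matrix, for a cluster `C` of radius at most `R`. -/
theorem bbf_row_submatrix_low_rank_approx
    (d n : ℕ) (κ : ℝ≥0) (f : EuclideanSpace ℝ (Fin d) → ℝ)
    (hf : LipschitzWith κ f)
    (x : Fin n → EuclideanSpace ℝ (Fin d))
    (K : Matrix (Fin n) (Fin n) ℝ)
    (hK : ∀ p q, K p q = f (x p - x q))
    (C : Finset (Fin n)) (R : ℝ) (c : EuclideanSpace ℝ (Fin d))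
    (hC : ∀ p ∈ C, ‖x p - c‖ ≤ R)
    (r : ℕ) (hr : 0 < r) :
    ∃ A : Matrix {p // p ∈ C} (Fin n) ℝ,
      A.rank ≤ r ∧
      frobNorm (K.submatrix (fun p : {p // p ∈ C} => p.1) id - A) ≤
        4 * (κ : ℝ) * (r : ℝ) ^ (-(1 : ℝ) / d) * Real.sqrt (C.card * n) * R := by
  obtain ⟨s, hs_card, hs_cover⟩ :=
    exists_finset_card_le_closedBall_subset_iUnion_closedBall_rpow c R hr
  rw [finrank_euclideanSpace_fin] at hs_cover
  set ε := 4 * R * (r : ℝ) ^ (-(1 : ℝ) / d)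
  have hnear : ∀ p : {p // p ∈ C}, ∃ t ∈ s, ‖x p - t‖ ≤ ε := fun p => by
    simpa [dist_eq_norm] using hs_cover (mem_closedBall_iff_norm.2 (hC p p.2))
  choose g hg_mem hg_near using hnear
  refine ⟨Matrix.of fun p q => f (g p - x q),
    (Matrix.rank_le_card_of_forall_row_mem fun p => Finset.mem_image_of_mem
      (fun t q => f (t - x q)) (hg_mem p)).trans (Finset.card_image_le.trans hs_card), ?_⟩
  calc _ ≤ Real.sqrt (Fintype.card {p // p ∈ C} * Fintype.card (Fin n)) * (κ * ε) := by
        refine frobNorm_le_of_forall_abs_le fun p q => ?_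
        calc |K p q - f (g p - x q)| = dist (f (x p - x q)) (f (g p - x q)) := by
              rw [hK, Real.dist_eq]
          _ ≤ κ * dist (x p - x q) (g p - x q) := hf.dist_le_mul _ _
          _ ≤ κ * ε := by
              rw [dist_sub_right, dist_eq_norm]
              exact mul_le_mul_of_nonneg_left (hg_near p) κ.2
    _ = _ := by
        simp only [Fintype.card_coe, Fintype.card_fin, ε]
        ring
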